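/- Let X be a quasicontinuous space (locally hypercompact directed space). For finite subsets G of X, the sets ⇑G = int(↑G) form a base of the topology of X, and for subsets G, H ⊆ X, G ≪_d H if and only if H ⊆ int(↑G). -/

import Mathlib

/-!
If `G ≪_d x`, let `V` be the set of points `z` having a finite `C ≪_d z` with `C ⊆ ↑G`; then
`x ∈ V ⊆ ↑G`. Since the space is directed, `V` is open as soon as every directed `D → z ∈ V`
meets `V`, and this holds because otherwise Rudin's lemma, applied to the finite sets `C \ ↑G`
(`C ∈ fin_d(d)`, `d ∈ D`), yields a directed set converging to `z` that avoids `↑G`. So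
`G ≪_d H` gives `H ⊆ int ↑G`, the converse is immediate, and the sets `int ↑F` with
`F ∈ fin_d(x)` form a neighbourhood base at `x`.
-/

namespace Conv

variable {X : Type}

/-- A directed preorder (index of a net), given as an explicit relation. -/
def DirIdx {I : Type} (r : I → I → Prop) : Prop :=
  Nonempty I ∧ (∀ i, r i i) ∧ (∀ a b c : I, r a b → r b c → r a c) ∧
    ∀ a b : I, ∃ c, r a c ∧ r b c

/-- Specialization order relative to a family `T` of "open" sets. -/
def sle (T : Set (Set X)) (x y : X) : Prop := ∀ U ∈ T, x ∈ U → y ∈ U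

/-- Upper closure of a set w.r.t. the specialization order of `T`. -/
def upset (T : Set (Set X)) (A : Set X) : Set X := {z | ∃ a ∈ A, sle T a z}

/-- `D` is a (nonempty) directed subset w.r.t. the specialization order of `T`. -/
def IsDirSet (T : Set (Set X)) (D : Set X) : Prop := D.Nonempty ∧ DirectedOn (sle T) D

/-- A subset `D` (viewed as a monotone net) converges to `x` w.r.t. `T`. -/
def DConv (T : Set (Set X)) (D : Set X) (x : X) : Prop :=
  ∀ U ∈ T, x ∈ U → (D ∩ U).Nonempty

/-- `U` is directed-open w.r.t. `T`. -/
def DirOpen (T : Set (Set X)) (U : Set X) : Prop :=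
  ∀ D x, IsDirSet T D → DConv T D x → x ∈ U → (D ∩ U).Nonempty

/-- The family of directed-open sets. -/
def DTop (T : Set (Set X)) : Set (Set X) := {U | DirOpen T U}

/-- The family of open sets of a topological space. -/
def opens (X : Type) [TopologicalSpace X] : Set (Set X) := {U | IsOpen U}

/-- Every directed-open set belongs to `T`. -/
def DirT (T : Set (Set X)) : Prop := ∀ U, DirOpen T U → U ∈ T

/-- A directed space: every directed-open set is open. -/
def IsDirectedSpace (X : Type) [TopologicalSpace X] : Prop := DirT (opens X)

/-- A net is eventually in `U`. -/
def EvIn {I : Type} (r : I → I → Prop) (xi : I → X) (U : Set X) : Prop :=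
  ∃ k, ∀ i, r k i → xi i ∈ U

/-- `y` is an eventual lower bound of the net `xi`. -/
def EvLB (T : Set (Set X)) {I : Type} (r : I → I → Prop) (xi : I → X) (y : X) : Prop :=
  ∃ k, ∀ i, r k i → sle T y (xi i)

/-- Topological convergence of a net w.r.t. the family `T` of open sets. -/
def NConv (T : Set (Set X)) {I : Type} (r : I → I → Prop) (xi : I → X) (x : X) : Prop :=
  ∀ U ∈ T, x ∈ U → EvIn r xi U

/-- `((x_i), x) ∈ S_X`: some directed set of eventual lower bounds converges to `x`. -/
def SConv (T : Set (Set X)) {I : Type} (r : I → I → Prop) (xi : I → X) (x : X) : Prop :=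
  ∃ D : Set X, IsDirSet T D ∧ (∀ d ∈ D, EvLB T r xi d) ∧ DConv T D x

/-- `U` is open in the topology determined by `S_X`. -/
def SOpen (T : Set (Set X)) (U : Set X) : Prop :=
  ∀ (I : Type) (r : I → I → Prop), DirIdx r → ∀ (xi : I → X) (x : X),
    SConv T r xi x → x ∈ U → EvIn r xi U

/-- `y ≪_d x`. -/
def WayBelow (T : Set (Set X)) (y x : X) : Prop :=
  ∀ D : Set X, IsDirSet T D → DConv T D x → ∃ d ∈ D, sle T y d

/-- A continuous space (relative to the family `T`). -/
def IsContinuousT (T : Set (Set X)) : Prop :=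
  DirT T ∧ ∀ x : X, IsDirSet T {y | WayBelow T y x} ∧ DConv T {y | WayBelow T y x} x

def IsContinuousSpace (X : Type) [TopologicalSpace X] : Prop := IsContinuousT (opens X)

/-- `G ≪_d H` for subsets. -/
def SWayBelow (T : Set (Set X)) (G H : Set X) : Prop :=
  ∀ (D : Set X) (x : X), IsDirSet T D → DConv T D x → x ∈ H → (D ∩ upset T G).Nonempty

/-- A directed family of finite sets (ordered by reverse inclusion of upper closures). -/
def IsDirFam (T : Set (Set X)) (F : Set (Set X)) : Prop :=
  F.Nonempty ∧ (∀ A ∈ F, A.Finite) ∧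
    ∀ A ∈ F, ∀ B ∈ F, ∃ C ∈ F, upset T C ⊆ upset T A ∧ upset T C ⊆ upset T B

/-- Convergence of a family of finite sets to `x`. -/
def FamConv (T : Set (Set X)) (F : Set (Set X)) (x : X) : Prop :=
  ∀ U ∈ T, x ∈ U → ∃ A ∈ F, upset T A ⊆ U

/-- `fin_d(x)`. -/
def finD (T : Set (Set X)) (x : X) : Set (Set X) := {A | A.Finite ∧ SWayBelow T A {x}}

def IsQuasicontinuousT (T : Set (Set X)) : Prop :=
  DirT T ∧ ∀ x : X, IsDirFam T (finD T x) ∧ FamConv T (finD T x) x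

def IsQuasicontinuousSpace (X : Type) [TopologicalSpace X] : Prop :=
  IsQuasicontinuousT (opens X)

/-- `A` is a quasi eventual lower bound of the net `xi`. -/
def QEvLB (T : Set (Set X)) {I : Type} (r : I → I → Prop) (xi : I → X) (A : Set X) : Prop :=
  A.Finite ∧ ∃ k, ∀ i, r k i → xi i ∈ upset T A

/-- `((x_i), x) ∈ S*_X`. -/
def QSConv (T : Set (Set X)) {I : Type} (r : I → I → Prop) (xi : I → X) (x : X) : Prop :=
  ∃ F : Set (Set X), IsDirFam T F ∧ (∀ A ∈ F, QEvLB T r xi A) ∧ FamConv T F x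

/-- `U` is open in the topology determined by `S*_X`. -/
def QSOpen (T : Set (Set X)) (U : Set X) : Prop :=
  ∀ (I : Type) (r : I → I → Prop), DirIdx r → ∀ (xi : I → X) (x : X),
    QSConv T r xi x → x ∈ U → EvIn r xi U

/-- `x ≡ liminf x_i`. -/
def IsLiminf (T : Set (Set X)) {I : Type} (r : I → I → Prop) (xi : I → X) (x : X) : Prop :=
  (∀ y, EvLB T r xi y → sle T y x) ∧
  (∀ z, (∀ y, EvLB T r xi y → sle T y z) → sle T x z) ∧
  SConv T r xi x

/-- `f : (J,s) → (I,r)` is a subnet map: monotone and cofinal, with directed domain. -/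
def Subnet {I J : Type} (r : I → I → Prop) (s : J → J → Prop) (f : J → I) : Prop :=
  DirIdx s ∧ (∀ a b, s a b → r (f a) (f b)) ∧ ∀ i, ∃ j, r i (f j)

/-- `z` is a cofinal lower bound of the net `xi`. -/
def CofLB (T : Set (Set X)) {I : Type} (r : I → I → Prop) (xi : I → X) (z : X) : Prop :=
  ∀ i, ∃ j, r i j ∧ sle T z (xi j)

/-- `((x_i), x) ∈ L_X`: every subnet has liminf `x`. -/
def LConv (T : Set (Set X)) {I : Type} (r : I → I → Prop) (xi : I → X) (x : X) : Prop :=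
  ∀ (J : Type) (s : J → J → Prop) (f : J → I), Subnet r s f →
    IsLiminf T s (fun j => xi (f j)) x

/-- `U` is open in the liminf topology `L(X)`. -/
def LOpen (T : Set (Set X)) (U : Set X) : Prop :=
  ∀ (I : Type) (r : I → I → Prop), DirIdx r → ∀ (xi : I → X) (x : X),
    LConv T r xi x → x ∈ U → EvIn r xi U

/-- `x ≡_q liminf x_i`. -/
def QLiminf (T : Set (Set X)) {I : Type} (r : I → I → Prop) (xi : I → X) (x : X) : Prop :=
  QSConv T r xi x ∧ ∀ y, EvLB T r xi y → sle T y x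

/-- `((x_i), x) ∈ L*_X`: every subnet quasi-liminf converges to `x`. -/
def QLConv (T : Set (Set X)) {I : Type} (r : I → I → Prop) (xi : I → X) (x : X) : Prop :=
  ∀ (J : Type) (s : J → J → Prop) (f : J → I), Subnet r s f →
    QLiminf T s (fun j => xi (f j)) x

/-- `U` is open in the quasi-liminf topology `L*(X)`. -/
def QLOpen (T : Set (Set X)) (U : Set X) : Prop :=
  ∀ (I : Type) (r : I → I → Prop), DirIdx r → ∀ (xi : I → X) (x : X),
    QLConv T r xi x → x ∈ U → EvIn r xi U

/-- The Lawson topology: generated by the opens of `X` and complements of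
principal upper sets. -/
def lawson (X : Type) [TopologicalSpace X] : Set (Set X) :=
  {U | (TopologicalSpace.generateFrom
      (opens X ∪ {V | ∃ y : X, V = {z : X | sle (opens X) y z}ᶜ})).IsOpen U}

section SpecializationOrder

variable {T : Set (Set X)}

lemma sle_refl (T : Set (Set X)) (x : X) : sle T x x := fun _ _ h => h

lemma sle_trans {x y z : X} (hxy : sle T x y) (hyz : sle T y z) : sle T x z :=
  fun U hU hx => hyz U hU (hxy U hU hx)

lemma subset_upset (T : Set (Set X)) (A : Set X) : A ⊆ upset T A :=
  fun a ha => ⟨a, ha, sle_refl T a⟩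

lemma mem_upset_of_sle {A : Set X} {a b : X} (ha : a ∈ upset T A) (hab : sle T a b) :
    b ∈ upset T A :=
  let ⟨c, hc, hca⟩ := ha
  ⟨c, hc, sle_trans hca hab⟩

lemma upset_subset_upset {A B : Set X} (h : A ⊆ upset T B) : upset T A ⊆ upset T B :=
  fun _ ⟨_, ha, hab⟩ => mem_upset_of_sle (h ha) hab

lemma upset_diff_upset_subset {G A B : Set X} (h : upset T B ⊆ upset T A) :
    upset T (B \ upset T G) ⊆ upset T (A \ upset T G) := by
  rintro w ⟨b, ⟨hbB, hbG⟩, hbw⟩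
  obtain ⟨a, haA, hab⟩ := h (subset_upset T B hbB)
  exact ⟨a, ⟨haA, fun haG => hbG (mem_upset_of_sle haG hab)⟩, sle_trans hab hbw⟩

lemma isDirSet_singleton (T : Set (Set X)) (z : X) : IsDirSet T {z} :=
  ⟨Set.singleton_nonempty z, fun _ ha _ hb =>
    ⟨z, rfl, ha ▸ sle_refl T z, hb ▸ sle_refl T z⟩⟩

lemma dConv_singleton (T : Set (Set X)) (z : X) : DConv T {z} z :=
  fun _ _ hz => ⟨z, rfl, hz⟩

lemma finD_mono {d d' : X} (h : sle T d d') : finD T d ⊆ finD T d' := by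
  rintro C ⟨hCfin, hC⟩
  refine ⟨hCfin, fun E x hE hEx hx => ?_⟩
  obtain rfl : x = d' := hx
  exact hC E d hE (fun U hU hdU => hEx U hU (h U hU hdU)) rfl

end SpecializationOrder

lemma _root_.IsChain.sInter_inter_nonempty {α : Type*} {c : Set (Set α)} (hc : IsChain (· ⊆ ·) c)
    (hne : c.Nonempty) {A : Set α} (hA : A.Finite) (h : ∀ M ∈ c, (M ∩ A).Nonempty) :
    (⋂₀ c ∩ A).Nonempty := by
  by_contra hempty
  have hcover : (hA.toFinset : Set α) ⊆ ⋃ M ∈ c, Mᶜ := by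
    intro a ha
    have : a ∉ ⋂₀ c := fun haC => hempty ⟨a, haC, hA.mem_toFinset.mp ha⟩
    simpa only [Set.mem_sInter, not_forall, Set.mem_iUnion, Set.mem_compl_iff, exists_prop]
      using this
  have hdir : DirectedOn (fun M N : Set α => Mᶜ ⊆ Nᶜ) c :=
    fun M hM N hN => (hc.total hM hN).elim
      (fun h => ⟨M, hM, subset_rfl, Set.compl_subset_compl.mpr h⟩)
      (fun h => ⟨N, hN, Set.compl_subset_compl.mpr h, subset_rfl⟩)
  obtain ⟨M, hM, hAM⟩ := hdir.exists_mem_subset_of_finset_subset_biUnion hne hcover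
  obtain ⟨a, haM, haA⟩ := h M hM
  exact hAM (hA.mem_toFinset.mpr haA) haM

section Rudin

variable {T : Set (Set X)} {H : Set (Set X)}

def IsRudinSelection (T : Set (Set X)) (H : Set (Set X)) (M : Set X) : Prop :=
  M ⊆ ⋃₀ H ∧ (∀ A ∈ H, (M ∩ A).Nonempty) ∧
    ∀ A ∈ H, ∀ m ∈ M, m ∈ upset T A → ∃ u ∈ M ∩ A, sle T u m

lemma isRudinSelection_sUnion (hA : ∀ A ∈ H, A.Nonempty) : IsRudinSelection T H (⋃₀ H) := by
  refine ⟨subset_rfl, fun A hAH => ?_, fun A hAH m _ hm => ?_⟩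
  · obtain ⟨a, ha⟩ := hA A hAH
    exact ⟨a, ⟨A, hAH, ha⟩, ha⟩
  · obtain ⟨u, hu, hum⟩ := hm
    exact ⟨u, ⟨⟨A, hAH, hu⟩, hu⟩, hum⟩

lemma isRudinSelection_sInter (hfin : ∀ A ∈ H, A.Finite) {c : Set (Set X)}
    (hcS : ∀ M ∈ c, IsRudinSelection T H M) (hc : IsChain (· ⊆ ·) c) (hne : c.Nonempty) :
    IsRudinSelection T H (⋂₀ c) := by
  obtain ⟨M₀, hM₀⟩ := hne
  refine ⟨(Set.sInter_subset_of_mem hM₀).trans (hcS M₀ hM₀).1,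
    fun A hA => hc.sInter_inter_nonempty ⟨M₀, hM₀⟩ (hfin A hA) fun M hM => (hcS M hM).2.1 A hA,
    fun A hA m hm hmA => ?_⟩
  -- every member of the chain meets the finite set of points of `A` below `m`
  have hbelow : (⋂₀ c ∩ {u ∈ A | sle T u m}).Nonempty := by
    refine hc.sInter_inter_nonempty ⟨M₀, hM₀⟩ ((hfin A hA).subset fun u hu => hu.1)
      fun M hM => ?_
    obtain ⟨u, ⟨huM, huA⟩, hum⟩ := (hcS M hM).2.2 A hA m (hm M hM) hmA
    exact ⟨u, huM, huA, hum⟩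
  obtain ⟨u, huc, huA, hum⟩ := hbelow
  exact ⟨u, ⟨huc, huA⟩, hum⟩

lemma exists_minimal_isRudinSelection (hfin : ∀ A ∈ H, A.Finite) (hA : ∀ A ∈ H, A.Nonempty) :
    ∃ M, Minimal (IsRudinSelection T H) M := by
  obtain ⟨M, -, hM⟩ := zorn_superset_nonempty {M | IsRudinSelection T H M}
    (fun c hcS hc hne => ⟨⋂₀ c, isRudinSelection_sInter hfin hcS hc hne,
      fun _ => Set.sInter_subset_of_mem⟩) _ (isRudinSelection_sUnion hA)
  exact ⟨M, hM⟩

/-- In a minimal selection `M`, removing the points not above `a ∈ M` gives a selection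
unless some `A ∈ H` has `M ∩ A ⊆ ↑a`. -/
lemma exists_forall_sle_of_minimal {M : Set X} (hM : Minimal (IsRudinSelection T H) M)
    {a : X} (ha : a ∈ M) : ∃ A ∈ H, ∀ u ∈ M ∩ A, sle T a u := by
  by_contra! hcon
  obtain ⟨hMsub, -, hMlb⟩ := hM.prop
  have hN : IsRudinSelection T H {m ∈ M | ¬ sle T a m} := by
    refine ⟨fun m hm => hMsub hm.1, fun A hA => ?_, fun A hA m hm hmA => ?_⟩
    · obtain ⟨u, hu, hau⟩ := hcon A hA
      exact ⟨u, ⟨hu.1, hau⟩, hu.2⟩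
    · obtain ⟨u, ⟨huM, huA⟩, hum⟩ := hMlb A hA m hm.1 hmA
      exact ⟨u, ⟨⟨huM, fun hau => hm.2 (sle_trans hau hum)⟩, huA⟩, hum⟩
  have haN : a ∈ {m ∈ M | ¬ sle T a m} := by
    rwa [hM.eq_of_subset hN fun _ hm => hm.1]
  exact haN.2 (sle_refl T a)

lemma directedOn_of_minimal_isRudinSelection
    (hdir : ∀ A ∈ H, ∀ B ∈ H, ∃ C ∈ H, upset T C ⊆ upset T A ∧ upset T C ⊆ upset T B)
    {M : Set X} (hM : Minimal (IsRudinSelection T H) M) : DirectedOn (sle T) M := by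
  obtain ⟨-, hMmeet, hMlb⟩ := hM.prop
  intro a ha b hb
  obtain ⟨A, hAH, hAa⟩ := exists_forall_sle_of_minimal hM ha
  obtain ⟨B, hBH, hBb⟩ := exists_forall_sle_of_minimal hM hb
  obtain ⟨C, hCH, hCA, hCB⟩ := hdir A hAH B hBH
  obtain ⟨z, hzM, hzC⟩ := hMmeet C hCH
  obtain ⟨u, huMA, huz⟩ := hMlb A hAH z hzM (hCA (subset_upset T C hzC))
  obtain ⟨v, hvMB, hvz⟩ := hMlb B hBH z hzM (hCB (subset_upset T C hzC))
  exact ⟨z, hzM, sle_trans (hAa u huMA) huz, sle_trans (hBb v hvMB) hvz⟩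

/-- Rudin's lemma. -/
lemma exists_isDirSet_inter_nonempty_subset_sUnion (hne : H.Nonempty)
    (hfin : ∀ A ∈ H, A.Finite) (hA : ∀ A ∈ H, A.Nonempty)
    (hdir : ∀ A ∈ H, ∀ B ∈ H, ∃ C ∈ H, upset T C ⊆ upset T A ∧ upset T C ⊆ upset T B) :
    ∃ M : Set X, IsDirSet T M ∧ (∀ A ∈ H, (M ∩ A).Nonempty) ∧ M ⊆ ⋃₀ H := by
  obtain ⟨M, hM⟩ := exists_minimal_isRudinSelection (T := T) hfin hA
  obtain ⟨hMsub, hMmeet, -⟩ := hM.prop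
  obtain ⟨A, hAH⟩ := hne
  obtain ⟨m, hm, -⟩ := hMmeet A hAH
  exact ⟨M, ⟨⟨m, hm⟩, directedOn_of_minimal_isRudinSelection hdir hM⟩, hMmeet, hMsub⟩

end Rudin

/-- Interpolation, via Rudin's lemma applied to the sets `C \ ↑G` with `C ∈ fin_d(d)`, `d ∈ D`. -/
lemma exists_mem_finD_subset_upset {T : Set (Set X)}
    (hq : ∀ x : X, IsDirFam T (finD T x) ∧ FamConv T (finD T x) x)
    {D : Set X} {z : X} (hD : IsDirSet T D) (hDz : DConv T D z)
    {G : Set X} (hG : SWayBelow T G {z}) :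
    ∃ d ∈ D, ∃ C ∈ finD T d, C ⊆ upset T G := by
  by_contra! hbad
  set H : Set (Set X) := {A | ∃ d ∈ D, ∃ C ∈ finD T d, A = C \ upset T G}
  have hne : H.Nonempty := by
    obtain ⟨d, hd⟩ := hD.1
    obtain ⟨C, hC⟩ := (hq d).1.1
    exact ⟨C \ upset T G, d, hd, C, hC, rfl⟩
  have hfin : ∀ A ∈ H, A.Finite := by
    rintro A ⟨d, -, C, hC, rfl⟩
    exact hC.1.sdiff
  have hA : ∀ A ∈ H, A.Nonempty := by
    rintro A ⟨d, hd, C, hC, rfl⟩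
    exact Set.sdiff_nonempty.mpr (hbad d hd C hC)
  have hdir : ∀ A ∈ H, ∀ B ∈ H, ∃ C ∈ H, upset T C ⊆ upset T A ∧ upset T C ⊆ upset T B := by
    rintro A ⟨d₁, hd₁, C₁, hC₁, rfl⟩ B ⟨d₂, hd₂, C₂, hC₂, rfl⟩
    obtain ⟨d₃, hd₃, h₁₃, h₂₃⟩ := hD.2 d₁ hd₁ d₂ hd₂
    obtain ⟨C₃, hC₃, hsub₁, hsub₂⟩ :=
      (hq d₃).1.2.2 C₁ (finD_mono h₁₃ hC₁) C₂ (finD_mono h₂₃ hC₂)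
    exact ⟨C₃ \ upset T G, ⟨d₃, hd₃, C₃, hC₃, rfl⟩,
      upset_diff_upset_subset hsub₁, upset_diff_upset_subset hsub₂⟩
  obtain ⟨M, hM, hMmeet, hMsub⟩ :=
    exists_isDirSet_inter_nonempty_subset_sUnion hne hfin hA hdir
  have hMz : DConv T M z := by
    intro U hU hzU
    obtain ⟨d, hdD, hdU⟩ := hDz U hU hzU
    obtain ⟨C, hC, hCU⟩ := (hq d).2 U hU hdU
    obtain ⟨e, heM, heC, -⟩ := hMmeet (C \ upset T G) ⟨d, hdD, C, hC, rfl⟩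
    exact ⟨e, heM, hCU (subset_upset T C heC)⟩
  obtain ⟨m, hmM, hmG⟩ := hG M z hM hMz rfl
  obtain ⟨-, ⟨d, -, C, -, rfl⟩, -, hmC⟩ := hMsub hmM
  exact hmC hmG

lemma mem_interior_upset_of_sWayBelow [TopologicalSpace X] (h : IsQuasicontinuousSpace X)
    {G : Set X} {x : X} (hG : SWayBelow (opens X) G {x}) :
    x ∈ interior (upset (opens X) G) := by
  obtain ⟨hdirT, hq⟩ := h
  set V : Set X := {z | ∃ C ∈ finD (opens X) z, C ⊆ upset (opens X) G}
  have hVopen : IsOpen V := by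
    refine hdirT V fun E z hE hEz ⟨C₀, hC₀, hC₀G⟩ => ?_
    obtain ⟨d, hdE, C, hC, hCC₀⟩ := exists_mem_finD_subset_upset hq hE hEz hC₀.2
    exact ⟨d, hdE, C, hC, hCC₀.trans (upset_subset_upset hC₀G)⟩
  have hxV : x ∈ V := by
    obtain ⟨d, rfl, hd⟩ :=
      exists_mem_finD_subset_upset hq (isDirSet_singleton _ x) (dConv_singleton _ x) hG
    exact hd
  have hVG : V ⊆ upset (opens X) G := by
    rintro z ⟨C, hC, hCG⟩
    obtain ⟨_, rfl, hzC⟩ := hC.2 {z} z (isDirSet_singleton _ z) (dConv_singleton _ z) rfl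
    exact upset_subset_upset hCG hzC
  exact interior_maximal hVG hVopen hxV

theorem stmt11_general (X : Type) [TopologicalSpace X]
    (h : IsQuasicontinuousSpace X) :
    (∀ U : Set X, IsOpen U → ∀ x ∈ U, ∃ F : Set X, F.Finite ∧
        x ∈ interior (upset (opens X) F) ∧ interior (upset (opens X) F) ⊆ U) ∧
    (∀ G H : Set X, SWayBelow (opens X) G H ↔ H ⊆ interior (upset (opens X) G)) := by
  refine ⟨fun U hU x hxU => ?_, fun G H => ⟨fun hGH z hz => ?_, fun hH D x _ hDx hxH => ?_⟩⟩
  · obtain ⟨F, ⟨hF, hFx⟩, hFU⟩ := (h.2 x).2 U hU hxU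
    exact ⟨F, hF, mem_interior_upset_of_sWayBelow h hFx, interior_subset.trans hFU⟩
  · refine mem_interior_upset_of_sWayBelow h fun D x hD hDx hx => hGH D x hD hDx ?_
    exact (show x = z from hx) ▸ hz
  · obtain ⟨e, heD, heG⟩ := hDx _ isOpen_interior (hH hxH)
    exact ⟨e, heD, interior_subset heG⟩

theorem stmt11 (X : Type) [TopologicalSpace X] [T0Space X]
    (h : IsQuasicontinuousSpace X) :
    (∀ U : Set X, IsOpen U → ∀ x ∈ U, ∃ F : Set X, F.Finite ∧
        x ∈ interior (upset (opens X) F) ∧ interior (upset (opens X) F) ⊆ U) ∧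
    (∀ G H : Set X, SWayBelow (opens X) G H ↔ H ⊆ interior (upset (opens X) G)) :=
  stmt11_general X h

end Conv
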